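/- arXiv:2406.20022 — 2 statements merged into one kernel-verified Lean document; each statement's English description precedes it below -/
import Mathlib

section
/- Let n, d₁, d₂ be positive integers, let U : ℂⁿ ⊗ ℂ² → ℂ^{d₁} ⊗ ℂ^{d₂} be a linear isometry, and let θ ∈ [0, π/2]. Let P be the orthogonal projection of ℂ² onto span{(1,0)} and L the orthogonal projection onto span{(cos θ, sin θ)}. If (P, v) and (L, w) are hidden-measurement pairs for U, with v, w unit vectors in ℂⁿ, then Re⟨v, w⟩ ≤ 2/(sin θ + 2 cos θ), and consequently ‖v − w‖² ≥ 2 − 4/(sin θ + 2 cos θ). -/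
open scoped ComplexConjugate Matrix

noncomputable section

/-- The matrix form of a vector in `ℂ^{d₁} ⊗ ℂ^{d₂}`. -/
def MatOf {d₁ d₂ : ℕ} (c : EuclideanSpace ℂ (Fin d₁ × Fin d₂)) :
    Matrix (Fin d₁) (Fin d₂) ℂ :=
  Matrix.of fun i j => c (i, j)

/-- The tensor product `w ⊗ x` of `w ∈ ℂⁿ` with `x ∈ ℂ²`. -/
def tensorWith2 {n : ℕ} (w : EuclideanSpace ℂ (Fin n)) (x : Fin 2 → ℂ) :
    EuclideanSpace ℂ (Fin n × Fin 2) :=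
  WithLp.toLp 2 (fun p : Fin n × Fin 2 => w p.1 * x p.2)

/-- `R_w = Mat(U(w ⊗ e₁))`. -/
def Rmat {n d₁ d₂ : ℕ}
    (U : EuclideanSpace ℂ (Fin n × Fin 2) →ₗᵢ[ℂ] EuclideanSpace ℂ (Fin d₁ × Fin d₂))
    (w : EuclideanSpace ℂ (Fin n)) : Matrix (Fin d₁) (Fin d₂) ℂ :=
  MatOf (U (tensorWith2 w ![1, 0]))

/-- `S_w = Mat(U(w ⊗ e₂))`. -/
def Smat {n d₁ d₂ : ℕ}
    (U : EuclideanSpace ℂ (Fin n × Fin 2) →ₗᵢ[ℂ] EuclideanSpace ℂ (Fin d₁ × Fin d₂))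
    (w : EuclideanSpace ℂ (Fin n)) : Matrix (Fin d₁) (Fin d₂) ℂ :=
  MatOf (U (tensorWith2 w ![0, 1]))

/-- The rank-one orthogonal projection onto the span of the unit vector `(x, y) ∈ ℂ²`. -/
def projOf (x y : ℂ) : Matrix (Fin 2) (Fin 2) ℂ :=
  !![x * conj x, x * conj y; y * conj x, y * conj y]

/-- `(P, w)` is a hidden-measurement pair for the isometry `U`. -/
def IsHiddenPair {n d₁ d₂ : ℕ}
    (U : EuclideanSpace ℂ (Fin n × Fin 2) →ₗᵢ[ℂ] EuclideanSpace ℂ (Fin d₁ × Fin d₂))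
    (P : Matrix (Fin 2) (Fin 2) ℂ) (w : EuclideanSpace ℂ (Fin n)) : Prop :=
  ‖w‖ = 1 ∧
  ∃ x y : ℂ, ‖x‖ ^ 2 + ‖y‖ ^ 2 = 1 ∧ P = projOf x y ∧
    (x • Rmat U w + y • Smat U w) * ((-(conj y)) • Rmat U w + (conj x) • Smat U w)ᴴ = 0 ∧
    (x • Rmat U w + y • Smat U w)ᴴ * ((-(conj y)) • Rmat U w + (conj x) • Smat U w) = 0


/-!
Let `r, r'` be the images under `U` of `v ⊗ e₁, v ⊗ e₂`, and `a, b` those of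
`w ⊗ (cos θ, sin θ), w ⊗ (-sin θ, cos θ)`. The hidden-pair condition for `(P, v)` makes the columns
of `Mat r` orthogonal to those of `Mat r'`, and the one for `(L, w)` makes the rows of `Mat a`
orthogonal to those of `Mat b`. Left multiplication of `Mat` by the projection onto the column
space of `Mat r` and right multiplication by the projection onto the row space of `Mat a` are
then commuting orthogonal projections `E, F` with `E r = r`, `E r' = 0`, `F a = a` and `F b = 0`.
Splitting `r, r'` along `F` and `a, b` along `E` and applying Cauchy–Schwarz and Pythagoras to the
pieces bounds `2 Re⟨r, a⟩ + 2 Re⟨r', b⟩ + Re⟨r', a⟩ - Re⟨r, b⟩ = (4 cos θ + 2 sin θ) Re⟨v, w⟩`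
by `4`.
-/

open scoped InnerProductSpace Kronecker

section StarProjection

variable {𝕜 V : Type*} [RCLike 𝕜] [NormedAddCommGroup V] [InnerProductSpace 𝕜 V]
  [CompleteSpace V] {P Q : V →L[𝕜] V}

theorem IsStarProjection.norm_sq_add_norm_sq_one_sub (hP : IsStarProjection P) (x : V) :
    ‖P x‖ ^ 2 + ‖(1 - P) x‖ ^ 2 = ‖x‖ ^ 2 := by
  have horth : ⟪P x, (1 - P) x⟫_𝕜 = 0 :=
    calc ⟪P x, (1 - P) x⟫_𝕜 = ⟪x, (P * (1 - P)) x⟫_𝕜 := hP.isSelfAdjoint.isSymmetric _ _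
      _ = 0 := by rw [hP.mul_one_sub_self, zero_apply, inner_zero_right]
  have h := norm_add_sq_eq_norm_sq_add_norm_sq_of_inner_eq_zero _ _ horth
  rw [← add_apply, add_sub_cancel, one_apply_eq_self] at h
  simp only [sq, h]

theorem inner_eq_inner_apply_of_commute (hP : IsSelfAdjoint P) (hQ : IsSelfAdjoint Q)
    (hPQ : Commute P Q) {x y : V} (hx : P x = x) (hy : Q y = y) :
    ⟪x, y⟫_𝕜 = ⟪Q x, P y⟫_𝕜 :=
  calc ⟪x, y⟫_𝕜 = ⟪P x, Q y⟫_𝕜 := by rw [hx, hy]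
    _ = ⟪x, P (Q y)⟫_𝕜 := hP.isSymmetric _ _
    _ = ⟪x, Q (P y)⟫_𝕜 := by rw [← mul_apply_eq_comp, hPQ.eq, mul_apply_eq_comp]
    _ = ⟪Q x, P y⟫_𝕜 := (hQ.isSymmetric _ _).symm

end StarProjection

theorem two_mul_add_le_four {ρ ρ' σ σ' α α' β β' : ℝ}
    (hρ : ρ ^ 2 + ρ' ^ 2 ≤ 1) (hσ : σ ^ 2 + σ' ^ 2 ≤ 1)
    (hα : α ^ 2 + α' ^ 2 ≤ 1) (hβ : β ^ 2 + β' ^ 2 ≤ 1) :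
    2 * (ρ * α) + 2 * (σ' * β') + σ * α' + ρ' * β ≤ 4 := by
  nlinarith [sq_nonneg (ρ - α), sq_nonneg (σ' - β'), sq_nonneg (ρ' - β), sq_nonneg (σ - α'),
    sq_nonneg ρ', sq_nonneg α', sq_nonneg β, sq_nonneg σ]

theorem re_inner_combination_le_four {V : Type*} [NormedAddCommGroup V] [InnerProductSpace ℂ V]
    [CompleteSpace V] {E F : V →L[ℂ] V} (hE : IsStarProjection E) (hF : IsStarProjection F)
    (hEF : Commute E F) {r s a b : V} (hr : ‖r‖ ≤ 1) (hs : ‖s‖ ≤ 1) (ha : ‖a‖ ≤ 1)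
    (hb : ‖b‖ ≤ 1) (hEr : E r = r) (hEs : E s = 0) (hFa : F a = a) (hFb : F b = 0) :
    2 * (⟪r, a⟫_ℂ).re + 2 * (⟪s, b⟫_ℂ).re + (⟪s, a⟫_ℂ).re - (⟪r, b⟫_ℂ).re ≤ 4 := by
  have hEs' : (1 - E) s = s := by simp [hEs]
  have hFb' : (1 - F) b = b := by simp [hFb]
  have hE'F : Commute (1 - E) F := (Commute.one_left F).sub_left hEF
  have hEF' : Commute E (1 - F) := (Commute.one_right E).sub_right hEF
  have hE'F' : Commute (1 - E) (1 - F) := (Commute.one_right _).sub_right hE'F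
  rw [inner_eq_inner_apply_of_commute hE.isSelfAdjoint hF.isSelfAdjoint hEF hEr hFa,
    inner_eq_inner_apply_of_commute hE.one_sub.isSelfAdjoint hF.one_sub.isSelfAdjoint hE'F'
      hEs' hFb',
    inner_eq_inner_apply_of_commute hE.one_sub.isSelfAdjoint hF.isSelfAdjoint hE'F hEs' hFa,
    inner_eq_inner_apply_of_commute hE.isSelfAdjoint hF.one_sub.isSelfAdjoint hEF' hEr hFb']
  have cauchy_schwarz (x y : V) : |(⟪x, y⟫_ℂ).re| ≤ ‖x‖ * ‖y‖ :=
    (Complex.abs_re_le_norm _).trans (norm_inner_le_norm _ _)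
  have pythagoras {P : V →L[ℂ] V} (hP : IsStarProjection P) {x : V} (hx : ‖x‖ ≤ 1) :
      ‖P x‖ ^ 2 + ‖(1 - P) x‖ ^ 2 ≤ 1 := by
    rw [hP.norm_sq_add_norm_sq_one_sub]
    exact pow_le_one₀ (norm_nonneg x) hx
  have := two_mul_add_le_four (pythagoras hF hr) (pythagoras hF hs) (pythagoras hE ha)
    (pythagoras hE hb)
  linarith [abs_le.mp (cauchy_schwarz (F r) (E a)),
    abs_le.mp (cauchy_schwarz ((1 - F) s) ((1 - E) b)),
    abs_le.mp (cauchy_schwarz (F s) ((1 - E) a)), abs_le.mp (cauchy_schwarz ((1 - F) r) (E b))]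

namespace Matrix

section StarProjection

variable {R m n : Type*} [CommSemiring R] [StarRing R] [Fintype m] [Fintype n]
  {A : Matrix m m R} {B : Matrix n n R}

theorem _root_.IsStarProjection.kronecker (hA : IsStarProjection A) (hB : IsStarProjection B) :
    IsStarProjection (A ⊗ₖ B) where
  isIdempotentElem := by
    rw [IsIdempotentElem, ← mul_kronecker_mul, hA.isIdempotentElem.eq, hB.isIdempotentElem.eq]
  isSelfAdjoint := by
    rw [IsSelfAdjoint, star_eq_conjTranspose, conjTranspose_kronecker, ← star_eq_conjTranspose,
      ← star_eq_conjTranspose, hA.isSelfAdjoint.star_eq, hB.isSelfAdjoint.star_eq]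

theorem _root_.IsStarProjection.transpose (hA : IsStarProjection A) : IsStarProjection Aᵀ where
  isIdempotentElem := by rw [IsIdempotentElem, ← transpose_mul, hA.isIdempotentElem.eq]
  isSelfAdjoint := isHermitian_iff_isSelfAdjoint.mp
    (isHermitian_iff_isSelfAdjoint.mpr hA.isSelfAdjoint).transpose

end StarProjection

variable {𝕜 m n k : Type*} [RCLike 𝕜] [Fintype m] [DecidableEq m] [Fintype n] [Fintype k]

theorem exists_isStarProjection_of_conjTranspose_mul_eq_zero {X : Matrix m n 𝕜}
    {Y : Matrix m k 𝕜} (h : Xᴴ * Y = 0) :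
    ∃ Q : Matrix m m 𝕜, IsStarProjection Q ∧ Q * X = X ∧ Q * Y = 0 := by
  classical
  let K := LinearMap.range (toEuclideanLin X)
  let e := toEuclideanCLM (n := m) (𝕜 := 𝕜)
  have hQ (z : m → 𝕜) :
      e.symm K.starProjection *ᵥ z = WithLp.ofLp (K.starProjection (WithLp.toLp 2 z)) := by
    rw [← ofLp_toEuclideanCLM, StarAlgEquiv.apply_symm_apply]
  refine ⟨e.symm K.starProjection, isStarProjection_starProjection.map e.symm,
    ext_iff_mulVec.mpr fun v => ?_, ext_iff_mulVec.mpr fun v => ?_⟩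
  · rw [← mulVec_mulVec, hQ]
    exact congrArg WithLp.ofLp (K.starProjection_eq_self_iff.mpr ⟨WithLp.toLp 2 v, rfl⟩)
  · rw [← mulVec_mulVec, hQ, K.starProjection_apply_eq_zero_iff.mpr, zero_mulVec]
    · rfl
    rintro _ ⟨u, rfl⟩
    rw [toLpLin_apply, EuclideanSpace.inner_toLp_toLp, star_mulVec, dotProduct_comm,
      ← dotProduct_mulVec, mulVec_mulVec, h, zero_mulVec, dotProduct_zero]

theorem exists_isStarProjection_of_mul_conjTranspose_eq_zero {X : Matrix n m 𝕜}
    {Y : Matrix k m 𝕜} (h : X * Yᴴ = 0) :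
    ∃ Q : Matrix m m 𝕜, IsStarProjection Q ∧ X * Q = X ∧ Y * Q = 0 := by
  obtain ⟨Q, hQ, hQX, hQY⟩ :=
    exists_isStarProjection_of_conjTranspose_mul_eq_zero (X := Xᴴ) (Y := Yᴴ)
      (by rw [conjTranspose_conjTranspose, h])
  have hQ' : Qᴴ = Q := hQ.isSelfAdjoint
  refine ⟨Q, hQ, ?_, ?_⟩
  · simpa [conjTranspose_mul, hQ'] using congrArg conjTranspose hQX
  · simpa [conjTranspose_mul, hQ'] using congrArg conjTranspose hQY

end Matrix

section Tensor

variable {n d₁ d₂ : ℕ}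

theorem matOf_injective : Function.Injective (MatOf (d₁ := d₁) (d₂ := d₂)) :=
  fun x y h => by ext ⟨i, j⟩; exact congrFun (congrFun h i) j

theorem matOf_toEuclideanCLM_kronecker (A : Matrix (Fin d₁) (Fin d₁) ℂ)
    (B : Matrix (Fin d₂) (Fin d₂) ℂ) (x : EuclideanSpace ℂ (Fin d₁ × Fin d₂)) :
    MatOf (Matrix.toEuclideanCLM (n := Fin d₁ × Fin d₂) (𝕜 := ℂ) (A ⊗ₖ B) x) =
      A * MatOf x * Bᵀ := by
  have h : B * (MatOf x)ᵀ * Aᵀ = (A * MatOf x * Bᵀ)ᵀ := by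
    simp only [Matrix.transpose_mul, Matrix.transpose_transpose, Matrix.mul_assoc]
  ext i j
  change ((A ⊗ₖ B) *ᵥ Matrix.vec (MatOf x)ᵀ) (i, j) = _
  rw [Matrix.kronecker_mulVec_vec, h]
  rfl

theorem exists_commuting_isStarProjection {x y z t : EuclideanSpace ℂ (Fin d₁ × Fin d₂)}
    (hxy : (MatOf x)ᴴ * MatOf y = 0) (hzt : MatOf z * (MatOf t)ᴴ = 0) :
    ∃ E F : EuclideanSpace ℂ (Fin d₁ × Fin d₂) →L[ℂ] EuclideanSpace ℂ (Fin d₁ × Fin d₂),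
      IsStarProjection E ∧ IsStarProjection F ∧ Commute E F ∧
        E x = x ∧ E y = 0 ∧ F z = z ∧ F t = 0 := by
  obtain ⟨P, hP, hPx, hPy⟩ := Matrix.exists_isStarProjection_of_conjTranspose_mul_eq_zero hxy
  obtain ⟨Q, hQ, hzQ, htQ⟩ := Matrix.exists_isStarProjection_of_mul_conjTranspose_eq_zero hzt
  let e := Matrix.toEuclideanCLM (n := Fin d₁ × Fin d₂) (𝕜 := ℂ)
  have hcomm : Commute (P ⊗ₖ (1 : Matrix (Fin d₂) (Fin d₂) ℂ))
      ((1 : Matrix (Fin d₁) (Fin d₁) ℂ) ⊗ₖ Qᵀ) := by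
    simp only [Commute, SemiconjBy, ← Matrix.mul_kronecker_mul, Matrix.mul_one, Matrix.one_mul]
  have hMat0 : MatOf (0 : EuclideanSpace ℂ (Fin d₁ × Fin d₂)) = 0 := rfl
  refine ⟨e (P ⊗ₖ 1), e (1 ⊗ₖ Qᵀ), (hP.kronecker (.one _)).map e,
    ((IsStarProjection.one _).kronecker hQ.transpose).map e, hcomm.map e, ?_, ?_, ?_, ?_⟩ <;>
    refine matOf_injective ?_ <;>
    simp only [e, matOf_toEuclideanCLM_kronecker, Matrix.transpose_one,
      Matrix.transpose_transpose, Matrix.mul_one, Matrix.one_mul, hPx, hPy, hzQ, htQ, hMat0]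

theorem inner_tensorWith2 (v w : EuclideanSpace ℂ (Fin n)) (x y : Fin 2 → ℂ) :
    ⟪tensorWith2 v x, tensorWith2 w y⟫_ℂ = (∑ j, conj (x j) * y j) * ⟪v, w⟫_ℂ := by
  simp only [PiLp.inner_apply, RCLike.inner_apply', tensorWith2, Fintype.sum_prod_type,
    Finset.sum_mul_sum, map_mul]
  rw [Finset.sum_comm]
  exact Finset.sum_congr rfl fun i _ => Finset.sum_congr rfl fun j _ => by ring

theorem norm_tensorWith2 (v : EuclideanSpace ℂ (Fin n)) (x : Fin 2 → ℂ) :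
    ‖tensorWith2 v x‖ = ‖v‖ * ‖(WithLp.toLp 2 x : EuclideanSpace ℂ (Fin 2))‖ := by
  rw [← sq_eq_sq₀ (norm_nonneg _) (by positivity), mul_pow, EuclideanSpace.norm_sq_eq,
    EuclideanSpace.norm_sq_eq, EuclideanSpace.norm_sq_eq, Finset.sum_mul_sum,
    Fintype.sum_prod_type]
  simp only [tensorWith2, norm_mul, mul_pow]

end Tensor

theorem exists_ne_zero_of_projOf_eq {x y x' y' : ℂ} (h' : ‖x'‖ ^ 2 + ‖y'‖ ^ 2 = 1)
    (h : projOf x y = projOf x' y') : ∃ u : ℂ, u ≠ 0 ∧ x = u * x' ∧ y = u * y' := by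
  have h00 := congrFun (congrFun h 0) 0
  have h10 := congrFun (congrFun h 1) 0
  have h11 := congrFun (congrFun h 1) 1
  simp only [projOf, Matrix.of_apply, Matrix.cons_val', Matrix.cons_val_zero,
    Matrix.cons_val_one, Matrix.empty_val', Matrix.cons_val_fin_one] at h00 h10 h11
  have hnorm : x * conj x + y * conj y = 1 := by
    rw [h00, h11, Complex.mul_conj', Complex.mul_conj']
    exact_mod_cast h'
  have h10' : conj y * x = conj y' * x' := by simpa [mul_comm] using congrArg conj h10
  have hx : x = (x * conj x' + y * conj y') * x' := by
    linear_combination x * h00 + y * h10' - x * hnorm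
  have hy : y = (x * conj x' + y * conj y') * y' := by
    linear_combination x * h10 + y * h11 - y * hnorm
  refine ⟨_, fun hu => ?_, hx, hy⟩
  rw [hu, zero_mul] at hx hy
  simp [hx, hy] at hnorm

section HiddenPair

variable {n d₁ d₂ : ℕ}
  {U : EuclideanSpace ℂ (Fin n × Fin 2) →ₗᵢ[ℂ] EuclideanSpace ℂ (Fin d₁ × Fin d₂)}

theorem matOf_map_tensorWith2 (w : EuclideanSpace ℂ (Fin n)) (x y : ℂ) :
    MatOf (U (tensorWith2 w ![x, y])) = x • Rmat U w + y • Smat U w := by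
  have h : tensorWith2 w ![x, y] = x • tensorWith2 w ![1, 0] + y • tensorWith2 w ![0, 1] := by
    ext ⟨i, j⟩
    fin_cases j <;> simp [tensorWith2, mul_comm]
  rw [h, map_add, map_smul, map_smul]
  rfl

/-- `projOf` determines `(x, y)` up to a phase, and the conditions are invariant under it. -/
theorem IsHiddenPair.mul_conjTranspose_eq_zero_and_conjTranspose_mul_eq_zero {x y : ℂ}
    {w : EuclideanSpace ℂ (Fin n)} (h : IsHiddenPair U (projOf x y) w)
    (hxy : ‖x‖ ^ 2 + ‖y‖ ^ 2 = 1) :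
    (x • Rmat U w + y • Smat U w) * ((-(conj y)) • Rmat U w + (conj x) • Smat U w)ᴴ = 0 ∧
    (x • Rmat U w + y • Smat U w)ᴴ * ((-(conj y)) • Rmat U w + (conj x) • Smat U w) = 0 := by
  obtain ⟨-, x', y', -, hproj, h₁, h₂⟩ := h
  obtain ⟨u, hu, rfl, rfl⟩ := exists_ne_zero_of_projOf_eq hxy hproj.symm
  have hA : (u * x) • Rmat U w + (u * y) • Smat U w = u • (x • Rmat U w + y • Smat U w) := by
    rw [smul_add, smul_smul, smul_smul]
  have hB : (-(conj (u * y))) • Rmat U w + conj (u * x) • Smat U w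
      = conj u • ((-(conj y)) • Rmat U w + (conj x) • Smat U w) := by
    rw [smul_add, smul_smul, smul_smul, map_mul, map_mul, mul_neg]
  have hu' : conj u ≠ 0 := (map_ne_zero _).mpr hu
  rw [hA, hB] at h₁ h₂
  simp only [Matrix.conjTranspose_smul, Matrix.smul_mul, Matrix.mul_smul, smul_smul,
    Complex.star_def, Complex.conj_conj] at h₁ h₂
  exact ⟨(smul_eq_zero.mp h₁).resolve_left (mul_ne_zero hu hu),
    (smul_eq_zero.mp h₂).resolve_left (mul_ne_zero hu' hu')⟩

theorem IsHiddenPair.mul_re_inner_le_two {c s : ℝ} (hcs : c ^ 2 + s ^ 2 = 1)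
    {v w : EuclideanSpace ℂ (Fin n)} (hP : IsHiddenPair U (projOf 1 0) v)
    (hL : IsHiddenPair U (projOf c s) w) :
    (s + 2 * c) * (⟪v, w⟫_ℂ).re ≤ 2 := by
  have hcs' : ‖(c : ℂ)‖ ^ 2 + ‖(s : ℂ)‖ ^ 2 = 1 := by simpa using hcs
  have hRS : (Rmat U v)ᴴ * Smat U v = 0 := by
    simpa using (hP.mul_conjTranspose_eq_zero_and_conjTranspose_mul_eq_zero (by simp)).2
  have hAB :
      MatOf (U (tensorWith2 w ![c, s])) * (MatOf (U (tensorWith2 w ![-s, c])))ᴴ = 0 := by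
    rw [matOf_map_tensorWith2, matOf_map_tensorWith2]
    simpa using (hL.mul_conjTranspose_eq_zero_and_conjTranspose_mul_eq_zero hcs').1
  obtain ⟨E, F, hE, hF, hEF, hEr, hEs, hFa, hFb⟩ :=
    exists_commuting_isStarProjection (x := U (tensorWith2 v ![1, 0])) hRS hAB
  have norm_le_one {z : EuclideanSpace ℂ (Fin n)} (hz : ‖z‖ = 1) {x y : ℂ}
      (hxy : ‖x‖ ^ 2 + ‖y‖ ^ 2 = 1) : ‖U (tensorWith2 z ![x, y])‖ ≤ 1 := by
    rw [U.norm_map, norm_tensorWith2, hz, one_mul, EuclideanSpace.norm_eq]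
    simp [hxy]
  have key := re_inner_combination_le_four hE hF hEF (norm_le_one hP.1 (by simp))
    (norm_le_one hP.1 (by simp)) (norm_le_one hL.1 hcs')
    (norm_le_one hL.1 (by simpa [add_comm] using hcs')) hEr hEs hFa hFb
  simp only [LinearIsometry.inner_map_map, inner_tensorWith2, Fin.sum_univ_two,
    Matrix.cons_val_zero, Matrix.cons_val_one, Matrix.cons_val_fin_one, map_one, map_zero,
    one_mul, zero_mul, add_zero, zero_add, neg_zero, mul_neg, neg_mul, Complex.neg_re,
    Complex.re_ofReal_mul] at key
  linarith

end HiddenPair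

theorem hidden_measurement_pairs_inner_bound_general
    (n d₁ d₂ : ℕ)
    (U : EuclideanSpace ℂ (Fin n × Fin 2) →ₗᵢ[ℂ] EuclideanSpace ℂ (Fin d₁ × Fin d₂))
    (θ : ℝ) (hθ : θ ∈ Set.Icc 0 (Real.pi / 2))
    (v w : EuclideanSpace ℂ (Fin n))
    (hP : IsHiddenPair U (projOf 1 0) v)
    (hL : IsHiddenPair U (projOf (Real.cos θ : ℂ) (Real.sin θ : ℂ)) w) :
    (inner ℂ v w : ℂ).re ≤ 2 / (Real.sin θ + 2 * Real.cos θ) ∧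
    ‖v - w‖ ^ 2 ≥ 2 - 4 / (Real.sin θ + 2 * Real.cos θ) := by
  have hcos : 0 ≤ Real.cos θ :=
    Real.cos_nonneg_of_mem_Icc ⟨by linarith [hθ.1, Real.pi_pos], hθ.2⟩
  have hsin : 0 ≤ Real.sin θ :=
    Real.sin_nonneg_of_nonneg_of_le_pi hθ.1 (by linarith [hθ.2, Real.pi_pos])
  have hden : 0 < Real.sin θ + 2 * Real.cos θ := by nlinarith [Real.cos_sq_add_sin_sq θ]
  have hbound : (inner ℂ v w : ℂ).re ≤ 2 / (Real.sin θ + 2 * Real.cos θ) := by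
    rw [le_div_iff₀ hden, mul_comm]
    exact hP.mul_re_inner_le_two (Real.cos_sq_add_sin_sq θ) hL
  refine ⟨hbound, ?_⟩
  rw [norm_sub_sq (𝕜 := ℂ), RCLike.re_to_complex, hP.1, hL.1, ge_iff_le,
    show (4 : ℝ) = 2 * 2 by norm_num, mul_div_assoc]
  linarith

/-- If `(P, v)` and `(L, w)` are hidden-measurement pairs for `U`, where `P`
projects onto `(1,0)` and `L` projects onto `(cos θ, sin θ)` with `θ ∈ [0, π/2]`, then
`Re⟨v, w⟩ ≤ 2/(sin θ + 2 cos θ)` and `‖v − w‖² ≥ 2 − 4/(sin θ + 2 cos θ)`. -/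
theorem hidden_measurement_pairs_inner_bound
    (n d₁ d₂ : ℕ) (hn : 0 < n) (hd₁ : 0 < d₁) (hd₂ : 0 < d₂)
    (U : EuclideanSpace ℂ (Fin n × Fin 2) →ₗᵢ[ℂ] EuclideanSpace ℂ (Fin d₁ × Fin d₂))
    (θ : ℝ) (hθ : θ ∈ Set.Icc 0 (Real.pi / 2))
    (v w : EuclideanSpace ℂ (Fin n))
    (hP : IsHiddenPair U (projOf 1 0) v)
    (hL : IsHiddenPair U (projOf (Real.cos θ : ℂ) (Real.sin θ : ℂ)) w) :
    (inner ℂ v w : ℂ).re ≤ 2 / (Real.sin θ + 2 * Real.cos θ) ∧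
    ‖v - w‖ ^ 2 ≥ 2 - 4 / (Real.sin θ + 2 * Real.cos θ) :=
  hidden_measurement_pairs_inner_bound_general n d₁ d₂ U θ hθ v w hP hL

end
end

section
/- Let V, V′, W, W′ be d₁ × d₂ complex matrices, each of Frobenius norm 1, satisfying V(V′)* = 0, V*(V′) = 0, W(W′)* = 0, and W*(W′) = 0. Then Re⟨V, W′⟩ ≤ ‖V − W‖ · ‖W′ − V′‖ = √((2 − 2 Re⟨V, W⟩)(2 − 2 Re⟨V′, W′⟩)), where ⟨A, B⟩ = Tr(A B*) is the Frobenius (Hilbert–Schmidt) inner product and ‖·‖ the Frobenius norm. -/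
/-!
Let `P` be the orthogonal projection onto the column space of `V`. Since `V* V' = 0`, `P V = V`
and `P V' = 0`; with `V V'* = 0` and `W W'* = 0` this makes `⟨P (V - W), W' - V'⟩ = ⟨V, W'⟩`, so
Cauchy–Schwarz and `‖P X‖ ≤ ‖X‖` give the inequality. The identity is `‖A - B‖² = 2 - 2 Re⟨A, B⟩`
for unit `A`, `B`.
-/

open scoped ComplexConjugate Matrix

noncomputable section

/-- The Frobenius (Hilbert–Schmidt) inner product `⟨A, B⟩ = Tr(A B*)`. -/
def frobInner {d₁ d₂ : ℕ} (A B : Matrix (Fin d₁) (Fin d₂) ℂ) : ℂ :=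
  (A * Bᴴ).trace

/-- The Frobenius norm `‖A‖ = √⟨A, A⟩`. -/
def frobNorm {d₁ d₂ : ℕ} (A : Matrix (Fin d₁) (Fin d₂) ℂ) : ℝ :=
  Real.sqrt (frobInner A A).re

namespace Matrix

variable {𝕜 m n : Type*} [RCLike 𝕜] [Fintype m] [DecidableEq m] [Fintype n] [DecidableEq n]

theorem exists_isStarProjection_mul_eq_self_and_mul_eq_zero {V V' : Matrix m n 𝕜}
    (h : Vᴴ * V' = 0) : ∃ P : Matrix m m 𝕜, IsStarProjection P ∧ P * V = V ∧ P * V' = 0 := by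
  let K : Submodule 𝕜 (EuclideanSpace 𝕜 m) := LinearMap.range (toEuclideanLin V)
  let P : Matrix m m 𝕜 := (toEuclideanCLM (n := m) (𝕜 := 𝕜)).symm K.starProjection
  have hP (y : m → 𝕜) : P *ᵥ y = WithLp.ofLp (K.starProjection (WithLp.toLp 2 y)) := by
    rw [← ofLp_toEuclideanCLM, StarAlgEquiv.apply_symm_apply]
  refine ⟨P, isStarProjection_starProjection.map (toEuclideanCLM (n := m) (𝕜 := 𝕜)).symm,
    ?_, ?_⟩
  · refine mulVec_injective (funext fun x => ?_)
    have hmem : WithLp.toLp 2 (V *ᵥ x) ∈ K := ⟨WithLp.toLp 2 x, rfl⟩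
    rw [← mulVec_mulVec, hP, Submodule.starProjection_eq_self_iff.mpr hmem]
  · refine mulVec_injective (funext fun x => ?_)
    have hperp : WithLp.toLp 2 (V' *ᵥ x) ∈ Kᗮ := by
      rintro _ ⟨z, rfl⟩
      rw [← LinearMap.adjoint_inner_right, ← toEuclideanLin_conjTranspose_eq_adjoint]
      simp [h]
    rw [← mulVec_mulVec, hP, (Submodule.starProjection_apply_eq_zero_iff K).mpr hperp,
      zero_mulVec]
    rfl

end Matrix

section Frobenius

variable {d₁ d₂ : ℕ}

def frobVec (A : Matrix (Fin d₁) (Fin d₂) ℂ) : EuclideanSpace ℂ (Fin d₁ × Fin d₂) :=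
  WithLp.toLp 2 (Function.uncurry A)

theorem frobNorm_nonneg (A : Matrix (Fin d₁) (Fin d₂) ℂ) : 0 ≤ frobNorm A :=
  Real.sqrt_nonneg _

theorem frobVec_sub (A B : Matrix (Fin d₁) (Fin d₂) ℂ) :
    frobVec (A - B) = frobVec A - frobVec B :=
  rfl

theorem frobInner_eq_inner (A B : Matrix (Fin d₁) (Fin d₂) ℂ) :
    frobInner A B = inner ℂ (frobVec B) (frobVec A) := by
  simp only [frobInner, Matrix.trace, Matrix.diag, Matrix.mul_apply, Matrix.conjTranspose_apply,
    frobVec, PiLp.inner_apply, RCLike.inner_apply, Fintype.sum_prod_type]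
  rfl

theorem frobNorm_eq_norm (A : Matrix (Fin d₁) (Fin d₂) ℂ) : frobNorm A = ‖frobVec A‖ := by
  rw [frobNorm, frobInner_eq_inner, norm_eq_sqrt_re_inner (𝕜 := ℂ)]
  rfl

theorem re_frobInner_le (A B : Matrix (Fin d₁) (Fin d₂) ℂ) :
    (frobInner A B).re ≤ frobNorm A * frobNorm B := by
  rw [frobInner_eq_inner, frobNorm_eq_norm, frobNorm_eq_norm, mul_comm]
  exact re_inner_le_norm (𝕜 := ℂ) _ _

theorem re_frobInner_comm (A B : Matrix (Fin d₁) (Fin d₂) ℂ) :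
    (frobInner A B).re = (frobInner B A).re := by
  rw [frobInner_eq_inner, frobInner_eq_inner]
  exact inner_re_symm (𝕜 := ℂ) _ _

theorem frobNorm_sub_sq {A B : Matrix (Fin d₁) (Fin d₂) ℂ} (hA : frobNorm A = 1)
    (hB : frobNorm B = 1) : frobNorm (A - B) ^ 2 = 2 - 2 * (frobInner A B).re := by
  rw [frobNorm_eq_norm] at hA hB ⊢
  rw [frobVec_sub, norm_sub_sq (𝕜 := ℂ), hA, hB, frobInner_eq_inner, inner_re_symm,
    RCLike.re_to_complex]
  ring

theorem frobInner_sub_left (A B C : Matrix (Fin d₁) (Fin d₂) ℂ) :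
    frobInner (A - B) C = frobInner A C - frobInner B C := by
  simp only [frobInner, Matrix.sub_mul, Matrix.trace_sub]

theorem frobInner_sub_right (A B C : Matrix (Fin d₁) (Fin d₂) ℂ) :
    frobInner A (B - C) = frobInner A B - frobInner A C := by
  simp only [frobInner, Matrix.conjTranspose_sub, Matrix.mul_sub, Matrix.trace_sub]

theorem frobInner_mul_left (P : Matrix (Fin d₁) (Fin d₁) ℂ)
    (X Y : Matrix (Fin d₁) (Fin d₂) ℂ) :
    frobInner (P * X) Y = frobInner X (Pᴴ * Y) := by
  rw [frobInner, frobInner, Matrix.conjTranspose_mul, Matrix.conjTranspose_conjTranspose,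
    Matrix.mul_assoc, Matrix.trace_mul_comm, ← Matrix.mul_assoc]

theorem frobNorm_mul_le_of_isStarProjection {P : Matrix (Fin d₁) (Fin d₁) ℂ}
    (hP : IsStarProjection P) (X : Matrix (Fin d₁) (Fin d₂) ℂ) :
    frobNorm (P * X) ≤ frobNorm X := by
  have hself : frobInner (P * X) (P * X) = frobInner X (P * X) := by
    have hPh : Pᴴ = P := hP.isSelfAdjoint
    rw [frobInner_mul_left, ← Matrix.mul_assoc, hPh, hP.isIdempotentElem.eq]
  have hsq : frobNorm (P * X) ^ 2 ≤ frobNorm X * frobNorm (P * X) := by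
    rw [frobNorm_eq_norm, ← inner_self_eq_norm_sq (𝕜 := ℂ), ← frobInner_eq_inner,
      RCLike.re_to_complex, hself, ← frobNorm_eq_norm]
    exact re_frobInner_le _ _
  nlinarith [frobNorm_nonneg X, frobNorm_nonneg (P * X)]

theorem frobInner_mul_sub_of_isSelfAdjoint {P : Matrix (Fin d₁) (Fin d₁) ℂ}
    (hP : IsSelfAdjoint P) {V V' W W' : Matrix (Fin d₁) (Fin d₂) ℂ} (hPV : P * V = V)
    (hPV' : P * V' = 0) (hVV' : V * V'ᴴ = 0) (hWW' : W * W'ᴴ = 0) :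
    frobInner (P * (V - W)) (W' - V') = frobInner V W' := by
  have hPh : Pᴴ = P := hP
  have hV_V' : frobInner V V' = 0 := by
    rw [frobInner, hVV', Matrix.trace_zero]
  have hPW_W' : frobInner (P * W) W' = 0 := by
    rw [frobInner, Matrix.mul_assoc, hWW', Matrix.mul_zero, Matrix.trace_zero]
  have hPW_V' : frobInner (P * W) V' = 0 := by
    rw [frobInner_mul_left, hPh, hPV', frobInner, Matrix.conjTranspose_zero, Matrix.mul_zero,
      Matrix.trace_zero]
  rw [Matrix.mul_sub, hPV, frobInner_sub_left, frobInner_sub_right, frobInner_sub_right, hV_V',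
    hPW_W', hPW_V']
  ring

end Frobenius

theorem frobenius_inner_bound_general (d₁ d₂ : ℕ)
    (V V' W W' : Matrix (Fin d₁) (Fin d₂) ℂ)
    (hV : frobNorm V = 1) (hV' : frobNorm V' = 1)
    (hW : frobNorm W = 1) (hW' : frobNorm W' = 1)
    (h1 : V * V'ᴴ = 0) (h2 : Vᴴ * V' = 0)
    (h3 : W * W'ᴴ = 0) :
    (frobInner V W').re ≤ frobNorm (V - W) * frobNorm (W' - V') ∧
    frobNorm (V - W) * frobNorm (W' - V') =
      Real.sqrt ((2 - 2 * (frobInner V W).re) * (2 - 2 * (frobInner V' W').re)) := by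
  obtain ⟨P, hP, hPV, hPV'⟩ := Matrix.exists_isStarProjection_mul_eq_self_and_mul_eq_zero h2
  refine ⟨?_, ?_⟩
  · calc (frobInner V W').re = (frobInner (P * (V - W)) (W' - V')).re := by
          rw [frobInner_mul_sub_of_isSelfAdjoint hP.isSelfAdjoint hPV hPV' h1 h3]
      _ ≤ frobNorm (P * (V - W)) * frobNorm (W' - V') := re_frobInner_le _ _
      _ ≤ frobNorm (V - W) * frobNorm (W' - V') := by
          gcongr
          · exact frobNorm_nonneg _
          · exact frobNorm_mul_le_of_isStarProjection hP _
  · rw [re_frobInner_comm V', ← frobNorm_sub_sq hV hW, ← frobNorm_sub_sq hW' hV', ← mul_pow,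
      Real.sqrt_sq (mul_nonneg (frobNorm_nonneg _) (frobNorm_nonneg _))]

/-- For Frobenius-norm-one matrices `V, V′, W, W′` with `V(V′)* = 0`,
`V*(V′) = 0`, `W(W′)* = 0`, `W*(W′) = 0`, one has
`Re⟨V, W′⟩ ≤ ‖V − W‖·‖W′ − V′‖ = √((2 − 2Re⟨V, W⟩)(2 − 2Re⟨V′, W′⟩))`. -/
theorem frobenius_inner_bound (d₁ d₂ : ℕ)
    (V V' W W' : Matrix (Fin d₁) (Fin d₂) ℂ)
    (hV : frobNorm V = 1) (hV' : frobNorm V' = 1)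
    (hW : frobNorm W = 1) (hW' : frobNorm W' = 1)
    (h1 : V * V'ᴴ = 0) (h2 : Vᴴ * V' = 0)
    (h3 : W * W'ᴴ = 0) (h4 : Wᴴ * W' = 0) :
    (frobInner V W').re ≤ frobNorm (V - W) * frobNorm (W' - V') ∧
    frobNorm (V - W) * frobNorm (W' - V') =
      Real.sqrt ((2 - 2 * (frobInner V W).re) * (2 - 2 * (frobInner V' W').re)) :=
  frobenius_inner_bound_general d₁ d₂ V V' W W' hV hV' hW hW' h1 h2 h3

end
end
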